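/- Let A = [A₁, A₂] and B = [B₁, B₂] be symmetric γ-sets of a graph G with |A₁| ≤ |A₂| and |B₁| ≤ |B₂|. If |B₁| = |A₁| < |A₂|, then A₂ ∩ B₂ ≠ ∅. -/

import Mathlib

open SimpleGraph

variable {V : Type*}

/-- `A` dominates `B`: every vertex of `B` is in the closed neighborhood of some vertex of `A`. -/
def Dominates (G : SimpleGraph V) (A B : Set V) : Prop :=
  ∀ b ∈ B, ∃ a ∈ A, a = b ∨ G.Adj a b

/-- `D` is a dominating set of `G`. -/
def IsDomSet (G : SimpleGraph V) (D : Set V) : Prop :=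
  Dominates G D Set.univ

/-- The domination number of `G`. -/
noncomputable def domNum (G : SimpleGraph V) : ℕ :=
  sInf {n | ∃ D : Set V, IsDomSet G D ∧ D.ncard = n}

/-- The prism of `G` with respect to a permutation `π`: two disjoint copies of `G`
joined by the perfect matching `u – π u`. -/
def prism (G : SimpleGraph V) (π : Equiv.Perm V) : SimpleGraph (V ⊕ V) :=
  SimpleGraph.fromRel (fun a b =>
    match a, b with
    | Sum.inl u, Sum.inl v => G.Adj u v
    | Sum.inr u, Sum.inr v => G.Adj u v
    | Sum.inl u, Sum.inr v => v = π u
    | Sum.inr _, Sum.inl _ => False)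

/-- `G` is a universal fixer. -/
def IsUniversalFixer (G : SimpleGraph V) : Prop :=
  ∀ π : Equiv.Perm V, domNum (prism G π) = domNum G

/-- `D` is a γ-set (minimum dominating set) of `G`. -/
def IsGammaSet (G : SimpleGraph V) (D : Set V) : Prop :=
  IsDomSet G D ∧ D.ncard = domNum G

/-- `D = [D₁, D₂]` is a symmetric γ-set of `G`. -/
def IsSymGammaSet (G : SimpleGraph V) (D D1 D2 : Set V) : Prop :=
  IsGammaSet G D ∧ D = D1 ∪ D2 ∧ Disjoint D1 D2 ∧ D1.Nonempty ∧ D2.Nonempty ∧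
    Dominates G D1 (Set.univ \ D2) ∧ Dominates G D2 (Set.univ \ D1)

/-- `S` is a 2-packing: closed neighborhoods of distinct vertices of `S` are disjoint. -/
def IsTwoPacking (G : SimpleGraph V) (S : Set V) : Prop :=
  ∀ x ∈ S, ∀ y ∈ S, x ≠ y →
    Disjoint (insert x (G.neighborSet x)) (insert y (G.neighborSet y))

/-- `D` is an even symmetric γ-set of `G`. -/
def IsEvenSymGammaSet (G : SimpleGraph V) (D : Set V) : Prop :=
  ∃ D1 D2, IsSymGammaSet G D D1 D2 ∧ D1.ncard = D2.ncard

/-!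
If `A₂ ∩ B₂ = ∅`, then `B₁` dominates `A₂`. A part of a symmetric γ-set is a 2-packing
(two of its vertices with a common closed neighbour could be swapped for that neighbour,
giving a smaller dominating set), so each vertex of `B₁` dominates at most one vertex of `A₂`.
Hence `|A₂| ≤ |B₁| = |A₁| < |A₂|`.
-/

lemma SimpleGraph.mem_insert_neighborSet_iff {G : SimpleGraph V} {a b : V} :
    a ∈ insert b (G.neighborSet b) ↔ a = b ∨ G.Adj a b := by
  simp [adj_comm]

lemma domNum_le_ncard {G : SimpleGraph V} {D : Set V} (hD : IsDomSet G D) :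
    domNum G ≤ D.ncard :=
  Nat.sInf_le ⟨D, hD, rfl⟩

lemma IsTwoPacking.ncard_le_of_dominates [Finite V] {G : SimpleGraph V} {S T : Set V}
    (hS : IsTwoPacking G S) (hT : Dominates G T S) : S.ncard ≤ T.ncard := by
  choose! f hfT hf using hT
  refine Set.ncard_le_ncard_of_injOn f hfT (fun x hx y hy hxy => ?_)
  by_contra hne
  exact Set.disjoint_left.mp (hS x hx y hy hne) (mem_insert_neighborSet_iff.mpr (hf x hx))
    (mem_insert_neighborSet_iff.mpr (hxy ▸ hf y hy))

namespace IsSymGammaSet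

variable {G : SimpleGraph V} {D D1 D2 : Set V}

lemma symm (h : IsSymGammaSet G D D1 D2) : IsSymGammaSet G D D2 D1 := by
  obtain ⟨hγ, rfl, hdisj, h1, h2, hd1, hd2⟩ := h
  exact ⟨hγ, Set.union_comm _ _, hdisj.symm, h2, h1, hd2, hd1⟩

lemma isTwoPacking_left [Finite V] (h : IsSymGammaSet G D D1 D2) : IsTwoPacking G D1 := by
  obtain ⟨⟨-, hγ⟩, rfl, hdisj, -, -, -, hd2⟩ := h
  intro x hx y hy hxy
  refine Set.disjoint_left.mpr fun z hzx hzy => ?_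
  rw [mem_insert_neighborSet_iff] at hzx hzy
  set D' := insert z ((D1 ∪ D2) \ {x, y})
  have hdom : IsDomSet G D' := by
    intro v _
    by_cases hvx : v = x
    · exact ⟨z, Set.mem_insert z _, hvx ▸ hzx⟩
    by_cases hvy : v = y
    · exact ⟨z, Set.mem_insert z _, hvy ▸ hzy⟩
    by_cases hv : v ∈ D1
    · exact ⟨v, Set.mem_insert_of_mem z ⟨Or.inl hv, by simp [hvx, hvy]⟩, Or.inl rfl⟩
    obtain ⟨a, ha, hav⟩ := hd2 v ⟨trivial, hv⟩
    have ha_not_mem : a ∉ ({x, y} : Set V) := by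
      rintro (rfl | rfl)
      exacts [Set.disjoint_left.mp hdisj hx ha, Set.disjoint_left.mp hdisj hy ha]
    exact ⟨a, Set.mem_insert_of_mem z ⟨Or.inr ha, ha_not_mem⟩, hav⟩
  have hsub : ({x, y} : Set V) ⊆ D1 ∪ D2 := by
    rintro v (rfl | rfl)
    exacts [Or.inl hx, Or.inl hy]
  have htwo : 2 ≤ (D1 ∪ D2).ncard := Set.ncard_pair hxy ▸ Set.ncard_le_ncard hsub
  have hsmall : D'.ncard ≤ (D1 ∪ D2).ncard - 2 + 1 := by
    calc D'.ncard ≤ ((D1 ∪ D2) \ {x, y}).ncard + 1 := Set.ncard_insert_le _ _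
      _ = (D1 ∪ D2).ncard - 2 + 1 := by rw [Set.ncard_sdiff hsub, Set.ncard_pair hxy]
  have := domNum_le_ncard hdom
  omega

lemma isTwoPacking_right [Finite V] (h : IsSymGammaSet G D D1 D2) : IsTwoPacking G D2 :=
  h.symm.isTwoPacking_left

end IsSymGammaSet

theorem stmt_11_general [Fintype V] (G : SimpleGraph V) (A A1 A2 B B1 B2 : Set V)
    (hA : IsSymGammaSet G A A1 A2) (hB : IsSymGammaSet G B B1 B2)
    (heq : B1.ncard = A1.ncard) (hlt : A1.ncard < A2.ncard) :
    (A2 ∩ B2).Nonempty := by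
  by_contra hdisj
  obtain ⟨-, -, -, -, -, hB1, -⟩ := hB
  have hB1A2 : Dominates G B1 A2 := fun a ha =>
    hB1 a ⟨trivial, fun haB2 => hdisj ⟨a, ha, haB2⟩⟩
  have := hA.isTwoPacking_right.ncard_le_of_dominates hB1A2
  omega

theorem stmt_11 [Fintype V] (G : SimpleGraph V) (A A1 A2 B B1 B2 : Set V)
    (hA : IsSymGammaSet G A A1 A2) (hB : IsSymGammaSet G B B1 B2)
    (hA12 : A1.ncard ≤ A2.ncard) (hB12 : B1.ncard ≤ B2.ncard)
    (heq : B1.ncard = A1.ncard) (hlt : A1.ncard < A2.ncard) :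
    (A2 ∩ B2).Nonempty :=
  stmt_11_general G A A1 A2 B B1 B2 hA hB heq hlt
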